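/- arXiv:2009.11817 — 5 statements merged into one kernel-verified Lean document; each statement's English description precedes it below -/
import Mathlib

section
/- Let V be a finite set of sites, d ≥ 2 a local dimension, and Φ a potential on V with ‖Φ(X)‖ ≤ h for all X ⊆ V (h > 0). Let β, δ ≥ 0 and let z : 𝒫(V) → ℂ satisfy |z_X − β| ≤ δ for all X ⊆ V. Then for every connected set 𝒳, the series defining W_z(𝒳) converges absolutely and |W_z(𝒳)| ≤ d^{|supp(𝒳)|}·(e^{(δ+β)·h} − 1)^{|𝒳|}. -/
/-!
With `t = (δ + β) h`, every factor `-z_X Φ(X)` has operator norm at most `t`, so each summand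
of the `p`-th term has subsystem trace at most `d^{|supp 𝒳|} tᵖ`, using
`|Tr M| ≤ d^{|V|} ‖M‖`. What remains is to count: the length-`p` sequences whose set of entries
is exactly `𝒳` have exponential generating function `(eᵗ - 1)^{|𝒳|}`.
-/

open scoped Matrix.Norms.L2Operator ComplexOrder

/-- An operator on `⊗_{x ∈ V} ℂ^d` (a matrix indexed by functions `V → Fin d`) is supported
on `X ⊆ V` if its entries vanish whenever the row and column indices differ outside `X`, and
depend only on the restrictions of the indices to `X`. -/
def SupportedOn {V : Type*} {d : ℕ} (M : Matrix (V → Fin d) (V → Fin d) ℂ)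
    (X : Finset V) : Prop :=
  (∀ f g : V → Fin d, (∃ x, x ∉ X ∧ f x ≠ g x) → M f g = 0) ∧
  (∀ f g f' g' : V → Fin d, (∀ x ∈ X, f x = f' x) → (∀ x ∈ X, g x = g' x) →
    (∀ x, x ∉ X → f x = g x) → (∀ x, x ∉ X → f' x = g' x) → M f g = M f' g')

/-- The overlap graph of a collection `𝒳` of finite sets: vertices are the members of `𝒳`,
and edges join distinct members that intersect. -/
def overlapGraph {V : Type*} [DecidableEq V] (𝒳 : Finset (Finset V)) :
    SimpleGraph {X : Finset V // X ∈ 𝒳} where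
  Adj A B := A ≠ B ∧ (A.1 ∩ B.1).Nonempty
  symm := by
    constructor
    intro A B hAB
    exact ⟨hAB.1.symm, by rw [Finset.inter_comm]; exact hAB.2⟩
  loopless := by
    constructor
    intro A hA
    exact hA.1 rfl

/-- A connected set for the potential `Φ`: a nonempty collection `𝒳` of subsets `X` with
`Φ(X) ≠ 0` whose overlap graph is connected. -/
def IsConnectedSet {V : Type*} [Fintype V] [DecidableEq V] {d : ℕ}
    (Φ : Finset V → Matrix (V → Fin d) (V → Fin d) ℂ) (𝒳 : Finset (Finset V)) : Prop :=
  𝒳.Nonempty ∧ (∀ X ∈ 𝒳, Φ X ≠ 0) ∧ (overlapGraph 𝒳).Connected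

/-- The `p`-th term of the series defining `W_z(𝒳)`:
`(1/p!) Σ_{(X₁,…,X_p)} Tr_{supp 𝒳}[Π_j (-z_{X_j} Φ(X_j))]`, where the sum runs over all
sequences of members of `𝒳` whose set of entries is all of `𝒳`, the matrix product is taken
in the order `j = 1, …, p`, and `Tr_{supp 𝒳}[M] = d^{-|V ∖ supp 𝒳|} Tr[M]` is the subsystem
trace. -/
noncomputable def Wterm {V : Type*} [Fintype V] [DecidableEq V] {d : ℕ}
    (Φ : Finset V → Matrix (V → Fin d) (V → Fin d) ℂ) (z : Finset V → ℂ)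
    (𝒳 : Finset (Finset V)) (p : ℕ) : ℂ :=
  (p.factorial : ℂ)⁻¹ *
    ∑ f ∈ Finset.univ.filter (fun f : Fin p → Finset V => Finset.image f Finset.univ = 𝒳),
      ((d : ℂ) ^ (Fintype.card V - (𝒳.biUnion id).card))⁻¹ *
        Matrix.trace (List.ofFn (fun j : Fin p => (-(z (f j))) • Φ (f j))).prod

open Finset

namespace Matrix

variable {𝕜 : Type*} [RCLike 𝕜] {n : Type*} [Fintype n] [DecidableEq n]

lemma norm_entry_le_l2_opNorm {m : Type*} [Fintype m] (A : Matrix m n 𝕜) (i : m) (j : n) :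
    ‖A i j‖ ≤ ‖A‖ := by
  have h := l2_opNorm_mulVec A (EuclideanSpace.single j 1)
  rw [PiLp.norm_single, norm_one, mul_one] at h
  refine le_trans (le_of_eq ?_) ((PiLp.norm_apply_le _ i).trans h)
  exact congrArg norm ((dotProduct_single _ _ _).trans (mul_one _)).symm

lemma norm_trace_le_card_mul_l2_opNorm (A : Matrix n n 𝕜) :
    ‖trace A‖ ≤ Fintype.card n * ‖A‖ :=
  calc ‖trace A‖ ≤ ∑ i, ‖A i i‖ := norm_sum_le _ _
    _ ≤ ∑ _i : n, ‖A‖ := sum_le_sum fun i _ => norm_entry_le_l2_opNorm A i i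
    _ = Fintype.card n * ‖A‖ := by simp

lemma l2_opNorm_one_le : ‖(1 : Matrix n n 𝕜)‖ ≤ 1 := by
  rw [cstar_norm_def, map_one]
  exact ContinuousLinearMap.norm_id_le

end Matrix

lemma norm_prod_ofFn_le_pow {R : Type*} [SeminormedRing R] (h1 : ‖(1 : R)‖ ≤ 1) {t : ℝ} :
    ∀ {p : ℕ} (A : Fin p → R), (∀ j, ‖A j‖ ≤ t) → ‖(List.ofFn A).prod‖ ≤ t ^ p
  | 0, _, _ => by simpa using h1
  | p + 1, A, hA => by
    rw [List.ofFn_succ, List.prod_cons, pow_succ']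
    exact (norm_mul_le _ _).trans <| mul_le_mul (hA 0)
      (norm_prod_ofFn_le_pow h1 _ fun j => hA j.succ) (norm_nonneg _)
      ((norm_nonneg _).trans (hA 0))

/-- Equality unless `x = 0 < n - m`, where `0⁻¹ = 0`. -/
lemma inv_pow_sub_mul_pow_le {K : Type*} [Field K] [LinearOrder K] [IsStrictOrderedRing K]
    {x : K} (hx : 0 ≤ x) {m n : ℕ} (hmn : m ≤ n) : (x ^ (n - m))⁻¹ * x ^ n ≤ x ^ m :=
  calc (x ^ (n - m))⁻¹ * x ^ n = (x ^ (n - m))⁻¹ * x ^ (n - m) * x ^ m := by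
        rw [mul_assoc, ← pow_add, Nat.sub_add_cancel hmn]
    _ ≤ 1 * x ^ m := by gcongr; exact inv_mul_le_one
    _ = x ^ m := one_mul _

section SeqsWithRange

variable {α : Type*} [Fintype α] [DecidableEq α]

def seqsWithRange (p : ℕ) (S : Finset α) : Finset (Fin p → α) :=
  univ.filter fun f => univ.image f = S

lemma sum_card_seqsWithRange_powerset (p : ℕ) (S : Finset α) :
    ∑ T ∈ S.powerset, #(seqsWithRange p T) = #S ^ p := by
  rw [← Fintype.card_piFinset_const,
    card_eq_sum_card_fiberwise (f := fun f => univ.image f) fun f hf =>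
      mem_powerset.mpr (by simpa [image_subset_iff] using hf)]
  refine sum_congr rfl fun T hT => congrArg card ?_
  ext f
  simp only [seqsWithRange, mem_filter, mem_univ, true_and, Fintype.mem_piFinset,
    iff_and_self]
  rintro rfl i
  exact mem_powerset.mp hT (mem_image_of_mem f (mem_univ i))

/-- Summing over the possible ranges `T ⊆ S` gives `e^{|S| t} = Σ_T (eᵗ - 1)^|T|`;
strong induction on `S` peels off the proper subsets. -/
lemma hasSum_card_seqsWithRange (t : ℝ) (S : Finset α) :
    HasSum (fun p => (#(seqsWithRange p S) : ℝ) * t ^ p / p.factorial)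
      ((Real.exp t - 1) ^ #S) := by
  induction S using Finset.strongInduction with
  | _ S IH =>
  have hexp : HasSum (fun p => (#S * t) ^ p / p.factorial) (Real.exp (#S * t)) := by
    rw [Real.exp_eq_exp_ℝ]; exact NormedSpace.expSeries_div_hasSum_exp _
  have hsub := hexp.sub (hasSum_sum fun T hT => IH T (mem_ssubsets.mp hT))
  have hsplit (f : Finset α → ℝ) : ∑ T ∈ S.powerset, f T = f S + ∑ T ∈ S.ssubsets, f T :=
    (add_sum_erase _ f (mem_powerset_self S)).symm
  have hterm : (fun p => (#(seqsWithRange p S) : ℝ) * t ^ p / p.factorial) = fun p =>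
      (#S * t) ^ p / p.factorial -
        ∑ T ∈ S.ssubsets, (#(seqsWithRange p T) : ℝ) * t ^ p / p.factorial := by
    ext p
    have hcount : (#S : ℝ) ^ p = ∑ T ∈ S.powerset, (#(seqsWithRange p T) : ℝ) := by
      exact_mod_cast (sum_card_seqsWithRange_powerset p S).symm
    rw [mul_pow, hcount, hsplit, add_mul, add_div, sum_mul, sum_div, add_sub_cancel_right]
  have hsum : (Real.exp t - 1) ^ #S =
      Real.exp (#S * t) - ∑ T ∈ S.ssubsets, (Real.exp t - 1) ^ #T := by
    have hbinom := sum_pow_mul_eq_add_pow (Real.exp t - 1) 1 S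
    simp only [one_pow, mul_one, sub_add_cancel] at hbinom
    rw [Real.exp_nat_mul, ← hbinom, hsplit, add_sub_cancel_right]
  rwa [hterm, hsum]

end SeqsWithRange

lemma norm_Wterm_le {V : Type*} [Fintype V] [DecidableEq V] {d : ℕ}
    (Φ : Finset V → Matrix (V → Fin d) (V → Fin d) ℂ) (z : Finset V → ℂ)
    (𝒳 : Finset (Finset V)) {t : ℝ} (ht : ∀ X, ‖-(z X) • Φ X‖ ≤ t) (p : ℕ) :
    ‖Wterm Φ z 𝒳 p‖ ≤
      (d : ℝ) ^ #(𝒳.biUnion id) * (#(seqsWithRange p 𝒳) * t ^ p / p.factorial) := by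
  set m := #(𝒳.biUnion id)
  have ht0 : 0 ≤ t := (norm_nonneg _).trans (ht ∅)
  have hsummand (f : Fin p → Finset V) :
      ‖((d : ℂ) ^ (Fintype.card V - m))⁻¹ *
        Matrix.trace (List.ofFn fun j => -(z (f j)) • Φ (f j)).prod‖ ≤ d ^ m * t ^ p := by
    rw [norm_mul, norm_inv, norm_pow, Complex.norm_natCast]
    calc _ ≤ ((d : ℝ) ^ (Fintype.card V - m))⁻¹ * ((d : ℝ) ^ Fintype.card V * t ^ p) := by
          gcongr
          refine (Matrix.norm_trace_le_card_mul_l2_opNorm _).trans ?_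
          rw [Fintype.card_fun, Fintype.card_fin, Nat.cast_pow]
          gcongr
          exact norm_prod_ofFn_le_pow Matrix.l2_opNorm_one_le _ fun j => ht (f j)
      _ ≤ d ^ m * t ^ p := by
          rw [← mul_assoc]
          gcongr
          exact inv_pow_sub_mul_pow_le (Nat.cast_nonneg d) (card_le_univ _)
  rw [Wterm, norm_mul, norm_inv, Complex.norm_natCast]
  calc _ ≤ (p.factorial : ℝ)⁻¹ * ∑ _f ∈ seqsWithRange p 𝒳, (d : ℝ) ^ m * t ^ p := by
        gcongr
        exact norm_sum_le_of_le _ fun f _ => hsummand f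
    _ = _ := by rw [sum_const, nsmul_eq_mul]; ring

theorem Wz_summable_and_bound_general {V : Type*} [Fintype V] [DecidableEq V] {d : ℕ}
    (Φ : Finset V → Matrix (V → Fin d) (V → Fin d) ℂ)
    (h : ℝ) (hnorm : ∀ X, ‖Φ X‖ ≤ h)
    (β δ : ℝ) (hβ : 0 ≤ β)
    (z : Finset V → ℂ) (hz : ∀ X, ‖z X - β‖ ≤ δ)
    (𝒳 : Finset (Finset V)) :
    Summable (fun p : ℕ => ‖Wterm Φ z 𝒳 p‖) ∧
    ‖∑' p : ℕ, Wterm Φ z 𝒳 p‖ ≤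
      (d : ℝ) ^ ((𝒳.biUnion id).card) * (Real.exp ((δ + β) * h) - 1) ^ 𝒳.card := by
  have hfactor (X : Finset V) : ‖-(z X) • Φ X‖ ≤ (δ + β) * h := by
    have hzX : ‖z X‖ ≤ δ + β :=
      calc ‖z X‖ ≤ ‖(β : ℂ)‖ + ‖z X - β‖ := norm_le_norm_add_norm_sub' _ _
        _ ≤ δ + β := by rw [Complex.norm_real, Real.norm_of_nonneg hβ]; linarith [hz X]
    rw [norm_smul, norm_neg]
    exact mul_le_mul hzX (hnorm X) (norm_nonneg _) ((norm_nonneg _).trans hzX)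
  have hterm := norm_Wterm_le Φ z 𝒳 hfactor
  have hmajorant := (hasSum_card_seqsWithRange ((δ + β) * h) 𝒳).mul_left
    ((d : ℝ) ^ #(𝒳.biUnion id))
  exact ⟨hmajorant.summable.of_nonneg_of_le (fun _ => norm_nonneg _) hterm,
    tsum_of_norm_bounded hmajorant hterm⟩

/-- For a potential with `‖Φ(X)‖ ≤ h` and complex parameters `z` with
`|z_X - β| ≤ δ`, for every connected set `𝒳` the series defining `W_z(𝒳)` converges
absolutely and `|W_z(𝒳)| ≤ d^{|supp 𝒳|} (e^{(δ+β)h} - 1)^{|𝒳|}`. -/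
theorem Wz_summable_and_bound {V : Type*} [Fintype V] [DecidableEq V] {d : ℕ} (hd : 2 ≤ d)
    (Φ : Finset V → Matrix (V → Fin d) (V → Fin d) ℂ)
    (hherm : ∀ X, (Φ X).IsHermitian) (hsupp : ∀ X, SupportedOn (Φ X) X)
    (h : ℝ) (hh : 0 < h) (hnorm : ∀ X, ‖Φ X‖ ≤ h)
    (β δ : ℝ) (hβ : 0 ≤ β) (hδ : 0 ≤ δ)
    (z : Finset V → ℂ) (hz : ∀ X, ‖z X - β‖ ≤ δ)
    (𝒳 : Finset (Finset V)) (h𝒳 : IsConnectedSet Φ 𝒳) :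
    Summable (fun p : ℕ => ‖Wterm Φ z 𝒳 p‖) ∧
    ‖∑' p : ℕ, Wterm Φ z 𝒳 p‖ ≤
      (d : ℝ) ^ ((𝒳.biUnion id).card) * (Real.exp ((δ + β) * h) - 1) ^ 𝒳.card :=
  Wz_summable_and_bound_general Φ h hnorm β δ hβ z hz 𝒳
end

section
/- Let V be a finite set of sites, let 𝒮 be a collection of nonempty subsets of V each of cardinality at most κ (κ ≥ 1 an integer), let h > 0 and g ≥ 1, and fix a site x₀ ∈ V. Assume that for every k ≥ 1 the number of connected sets (relative to 𝒮) of size k containing x₀ is at most g^k. Then for every δ > 0 and β ≥ 0 with β + δ ≤ 1/(5·e·g·h·κ), one has Σ_𝒳 (e^{(δ+β)·h} − 1)^{|𝒳|}·e^{g·h·e²·(δ+β)·|supp(𝒳)|} ≤ e·(e − 1)·g·h·(δ + β), where the (finite) sum runs over all connected sets 𝒳 containing x₀. -/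
/-- A connected set (relative to the collection `𝒮`) containing the site `x₀`: a nonempty
collection `𝒳 ⊆ 𝒮` with `x₀ ∈ ⋃ 𝒳` whose overlap graph is connected. -/
def IsConnectedSetIn {V : Type*} [DecidableEq V] (𝒮 : Finset (Finset V)) (x₀ : V)
    (𝒳 : Finset (Finset V)) : Prop :=
  𝒳.Nonempty ∧ 𝒳 ⊆ 𝒮 ∧ x₀ ∈ 𝒳.biUnion id ∧ (overlapGraph 𝒳).Connected

open Finset Real

lemma exp_sub_one_le_of_le_one {t : ℝ} (ht0 : 0 ≤ t) (ht1 : t ≤ 1) :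
    exp t - 1 ≤ (exp 1 - 1) * t := by
  have hconv := convexOn_exp.2 (Set.mem_univ 0) (Set.mem_univ 1)
    (sub_nonneg.2 ht1) ht0 (sub_add_cancel 1 t)
  simp only [smul_eq_mul, mul_zero, mul_one, zero_add, exp_zero] at hconv
  linarith

lemma exp_le_two_of_le_exp_one_div_five {x : ℝ} (hx : x ≤ exp 1 / 5) : exp x ≤ 2 := by
  have hlog : x ≤ log 2 := by linarith [exp_one_lt_d9, log_two_gt_d9]
  calc exp x ≤ exp (log 2) := exp_le_exp.2 hlog
    _ = 2 := exp_log two_pos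

lemma exp_sub_one_pow_mul_exp_le {t c : ℝ} {m n κ : ℕ} (ht0 : 0 ≤ t) (ht1 : t ≤ 1)
    (hc : 0 ≤ c) (hm : m ≤ n * κ) :
    (exp t - 1) ^ n * exp (c * m) ≤ ((exp 1 - 1) * t * exp (c * κ)) ^ n := by
  have hm' : c * m ≤ n * (c * κ) := by
    calc c * m ≤ c * (n * κ : ℕ) := by gcongr
      _ = n * (c * κ) := by push_cast; ring
  have hchord := exp_sub_one_le_of_le_one ht0 ht1
  have hpos : 0 ≤ exp t - 1 := sub_nonneg.2 (one_le_exp ht0)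
  rw [mul_pow, ← exp_nat_mul]
  exact mul_le_mul (pow_le_pow_left₀ hpos hchord n) (exp_le_exp.2 hm') (exp_nonneg _)
    (pow_nonneg (hpos.trans hchord) n)

lemma Finset.sum_pow_le_div_one_sub_of_card_fiber_le {α : Type*} (F : Finset α) (n : α → ℕ)
    (hn : ∀ x ∈ F, 1 ≤ n x) {g a : ℝ} (hg : 0 ≤ g) (ha : 0 ≤ a) (hga : g * a < 1)
    (hcount : ∀ k, 1 ≤ k → (#{x ∈ F | n x = k} : ℝ) ≤ g ^ k) :
    ∑ x ∈ F, a ^ n x ≤ g * a / (1 - g * a) := by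
  have hmaps : ∀ x ∈ F, n x ∈ Ico 1 (F.sup n + 1) := fun x hx =>
    mem_Ico.2 ⟨hn x hx, Nat.lt_succ_of_le (le_sup hx)⟩
  calc ∑ x ∈ F, a ^ n x
      = ∑ k ∈ Ico 1 (F.sup n + 1), ∑ x ∈ F with n x = k, a ^ n x :=
        (sum_fiberwise_of_maps_to hmaps _).symm
    _ = ∑ k ∈ Ico 1 (F.sup n + 1), (#{x ∈ F | n x = k} : ℝ) * a ^ k := by
        refine sum_congr rfl fun k _ => ?_
        rw [sum_congr rfl fun x hx => by rw [(mem_filter.1 hx).2], sum_const, nsmul_eq_mul]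
    _ ≤ ∑ k ∈ Ico 1 (F.sup n + 1), (g * a) ^ k := by
        refine sum_le_sum fun k hk => ?_
        rw [mul_pow]
        exact mul_le_mul_of_nonneg_right (hcount k (mem_Ico.1 hk).1) (pow_nonneg ha k)
    _ ≤ (g * a) ^ 1 / (1 - g * a) := geom_sum_Ico_le_of_lt_one (mul_nonneg hg ha) hga
    _ = g * a / (1 - g * a) := by rw [pow_one]

lemma sub_one_mul_mul_div_one_sub_le {u X : ℝ} (hu : 0 ≤ u) (hu5 : 5 * exp 1 * u ≤ 1)
    (hX0 : 0 ≤ X) (hX : X ≤ 2) :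
    (exp 1 - 1) * u * X < 1 ∧
      (exp 1 - 1) * u * X / (1 - (exp 1 - 1) * u * X) ≤ exp 1 * (exp 1 - 1) * u := by
  have he := exp_one_gt_d9
  have he1 : 0 ≤ exp 1 - 1 := by linarith
  have heu : exp 1 * u ≤ 1 / 5 := by linarith
  have hr : exp 1 * ((exp 1 - 1) * u * X) ≤ (exp 1 - 1) / 5 * 2 := by
    calc exp 1 * ((exp 1 - 1) * u * X) = (exp 1 - 1) * (exp 1 * u) * X := by ring
      _ ≤ (exp 1 - 1) * (1 / 5) * 2 := by gcongr
      _ = (exp 1 - 1) / 5 * 2 := by ring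
  have hr1 : (exp 1 - 1) * u * X < 1 := by nlinarith
  refine ⟨hr1, (div_le_iff₀ (sub_pos.2 hr1)).2 ?_⟩
  -- it remains to see `X ≤ e (1 - r)`, which holds as `X ≤ 2 ≤ (3e + 2) / 5` for `e ≥ 8 / 3`
  have hkey : X ≤ exp 1 * (1 - (exp 1 - 1) * u * X) := by nlinarith
  calc (exp 1 - 1) * u * X ≤ (exp 1 - 1) * u * (exp 1 * (1 - (exp 1 - 1) * u * X)) := by
        gcongr
    _ = exp 1 * (exp 1 - 1) * u * (1 - (exp 1 - 1) * u * X) := by ring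

open Classical in
/-- Lemma B.5 of the paper. If at most `g^k` connected sets of size `k`
contain a fixed site `x₀`, and all members of `𝒮` are nonempty of cardinality at most `κ`,
then for `β + δ ≤ 1/(5 e g h κ)` one has
`Σ_𝒳 (e^{(δ+β)h} - 1)^{|𝒳|} e^{g h e² (δ+β) |supp 𝒳|} ≤ e (e-1) g h (δ+β)`,
the sum running over connected sets `𝒳` containing `x₀`. -/
theorem connected_sets_weighted_sum_bound {V : Type*} [Fintype V] [DecidableEq V]
    (𝒮 : Finset (Finset V)) (κ : ℕ) (hκ : 1 ≤ κ)
    (h𝒮 : ∀ X ∈ 𝒮, X.Nonempty ∧ X.card ≤ κ)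
    (h g : ℝ) (hh : 0 < h) (hg : 1 ≤ g) (x₀ : V)
    (hcount : ∀ k : ℕ, 1 ≤ k →
      ((Finset.univ.filter fun 𝒳 : Finset (Finset V) =>
          IsConnectedSetIn 𝒮 x₀ 𝒳 ∧ 𝒳.card = k).card : ℝ) ≤ g ^ k)
    (δ β : ℝ) (hδ : 0 < δ) (hβ : 0 ≤ β)
    (hβδ : β + δ ≤ 1 / (5 * Real.exp 1 * g * h * κ)) :
    ∑ 𝒳 ∈ Finset.univ.filter (fun 𝒳 : Finset (Finset V) => IsConnectedSetIn 𝒮 x₀ 𝒳),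
      (Real.exp ((δ + β) * h) - 1) ^ 𝒳.card *
        Real.exp (g * h * Real.exp 2 * (δ + β) * (𝒳.biUnion id).card) ≤
      Real.exp 1 * (Real.exp 1 - 1) * g * h * (δ + β) := by
  have hu : 0 ≤ g * h * (δ + β) := by positivity
  have huκ : 5 * exp 1 * (g * h * (δ + β)) * κ ≤ 1 := by
    rw [le_div_iff₀ (by positivity)] at hβδ
    linarith
  have hu5 : 5 * exp 1 * (g * h * (δ + β)) ≤ 1 := by
    nlinarith [exp_pos 1, (Nat.one_le_cast (α := ℝ)).2 hκ]
  have ht1 : (δ + β) * h ≤ 1 := by nlinarith [exp_one_gt_d9]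
  have hX : exp (g * h * exp 2 * (δ + β) * κ) ≤ 2 := by
    refine exp_le_two_of_le_exp_one_div_five ?_
    rw [show (2 : ℝ) = 1 + 1 by norm_num, exp_add]
    nlinarith [exp_pos 1]
  set a := (exp 1 - 1) * ((δ + β) * h) * exp (g * h * exp 2 * (δ + β) * κ)
  have hga : g * a = (exp 1 - 1) * (g * h * (δ + β)) * exp (g * h * exp 2 * (δ + β) * κ) := by
    ring
  obtain ⟨hr1, hratio⟩ := sub_one_mul_mul_div_one_sub_le hu hu5 (exp_nonneg _) hX
  rw [← hga] at hr1 hratio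
  calc _ ≤ ∑ 𝒳 ∈ univ.filter (IsConnectedSetIn 𝒮 x₀), a ^ 𝒳.card := by
        refine sum_le_sum fun 𝒳 h𝒳 => exp_sub_one_pow_mul_exp_le (by positivity) ht1
          (by positivity) (card_biUnion_le_card_mul _ _ _ fun X hX => ?_)
        exact (h𝒮 X ((mem_filter.1 h𝒳).2.2.1 hX)).2
    _ ≤ g * a / (1 - g * a) := by
        refine sum_pow_le_div_one_sub_of_card_fiber_le _ _
          (fun 𝒳 h𝒳 => card_pos.2 (mem_filter.1 h𝒳).2.1) (by linarith) ?_ hr1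
          fun k hk => by rw [filter_filter]; exact hcount k hk
        exact mul_nonneg (mul_nonneg (sub_nonneg.2 (one_le_exp zero_le_one)) (by positivity))
          (exp_nonneg _)
    _ ≤ _ := hratio.trans_eq (by ring)
end

section
/- Let ρ be a density matrix and let σ₁, σ₂, σ₃ be positive definite density matrices on ℂ^n. Then D(ρ‖σ₁) ≤ D(ρ‖σ₂) + D(ρ‖σ₃) + log Tr[exp(−log σ₁ + log σ₂ + log σ₃)], where exp is the matrix exponential of the Hermitian matrix −log σ₁ + log σ₂ + log σ₃. -/
/-!
With `H = -log σ₁ + log σ₂ + log σ₃` the claim reads `Tr ρH ≤ Tr ρ log ρ + log Tr exp H`, the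
Gibbs variational principle, which holds for every Hermitian `H`. Let `p` and `λ` be the spectra
of `ρ` and `H`, with eigenbases `u` and `v`. Then `Tr ρH = ∑ⱼ qⱼ λⱼ` for `q = W p`, where
`Wⱼᵢ = |⟨vⱼ, uᵢ⟩|²` is doubly stochastic. The classical Gibbs inequality gives
`∑ qλ ≤ ∑ q log q + log ∑ exp λ`, and convexity of `x log x` under the doubly stochastic `W`
gives `∑ q log q ≤ ∑ p log p`.
-/

open scoped Matrix.Norms.L2Operator ComplexOrder

/-- The logarithm of a matrix, defined for Hermitian matrices via the spectral functional
calculus (with the convention `log 0 = 0`, inherited from `Real.log`), and junk value `0`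
on non-Hermitian matrices. -/
noncomputable def matLog {n : ℕ} (A : Matrix (Fin n) (Fin n) ℂ) : Matrix (Fin n) (Fin n) ℂ :=
  if hA : A.IsHermitian then
    (hA.eigenvectorUnitary : Matrix (Fin n) (Fin n) ℂ) *
      Matrix.diagonal (fun i => (Real.log (hA.eigenvalues i) : ℂ)) *
      (star hA.eigenvectorUnitary : Matrix (Fin n) (Fin n) ℂ)
  else 0

/-- The quantum relative entropy `D(ρ‖M) = Tr[ρ (log ρ - log M)]`. -/
noncomputable def relEnt {n : ℕ} (ρ M : Matrix (Fin n) (Fin n) ℂ) : ℝ :=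
  (Matrix.trace (ρ * (matLog ρ - matLog M))).re

open Real Matrix

section Real

variable {ι : Type*} [Fintype ι]

lemma mul_log_sub_mul_log_le_sub {q r : ℝ} (hq : 0 ≤ q) (hr : 0 < r) :
    q * log r - q * log q ≤ r - q := by
  rcases hq.eq_or_lt with rfl | hq
  · simpa using hr.le
  calc q * log r - q * log q = q * log (r / q) := by rw [log_div hr.ne' hq.ne']; ring
    _ ≤ q * (r / q - 1) := mul_le_mul_of_nonneg_left (log_le_sub_one_of_pos (by positivity)) hq.le
    _ = r - q := by field_simp

theorem sum_mul_sub_sum_mul_log_le_log_sum_exp {q : ι → ℝ} (hq0 : ∀ i, 0 ≤ q i)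
    (hq1 : ∑ i, q i = 1) (x : ι → ℝ) :
    ∑ i, q i * x i - ∑ i, q i * log (q i) ≤ log (∑ i, exp (x i)) := by
  have hZ : 0 < ∑ i, exp (x i) := Finset.sum_pos (fun i _ => exp_pos _)
    (Finset.nonempty_of_sum_ne_zero (hq1 ▸ one_ne_zero))
  have key := Finset.sum_le_sum fun i (_ : i ∈ Finset.univ) =>
    mul_log_sub_mul_log_le_sub (hq0 i) (div_pos (exp_pos (x i)) hZ)
  simp only [log_div (exp_ne_zero _) hZ.ne', log_exp, mul_sub, Finset.sum_sub_distrib,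
    ← Finset.sum_mul, ← Finset.sum_div, hq1, div_self hZ.ne', one_mul, sub_self] at key
  linarith

theorem ConvexOn.sum_map_mulVec_le [DecidableEq ι] {s : Set ℝ} {f : ℝ → ℝ} (hf : ConvexOn ℝ s f)
    {M : Matrix ι ι ℝ} (hM : M ∈ doublyStochastic ℝ ι) {p : ι → ℝ} (hp : ∀ i, p i ∈ s) :
    ∑ j, f ((M *ᵥ p) j) ≤ ∑ i, f (p i) := by
  calc ∑ j, f ((M *ᵥ p) j) ≤ ∑ j, (M *ᵥ (f ∘ p)) j := Finset.sum_le_sum fun j _ => by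
        simpa [mulVec, dotProduct] using hf.map_sum_le (t := Finset.univ) (w := M j) (p := p)
          (fun i _ => nonneg_of_mem_doublyStochastic hM) (sum_row_of_mem_doublyStochastic hM j)
          (fun i _ => hp i)
    _ = ∑ i, f (p i) := sum_mulVec_of_mem_doublyStochastic hM

end Real

section Unitary

variable {𝕜 : Type*} [RCLike 𝕜] {m n : Type*} [Fintype n] [DecidableEq n]

def entrywiseNormSq (B : Matrix m n 𝕜) : Matrix m n ℝ := of fun i j => ‖B i j‖ ^ 2

omit [Fintype n] [DecidableEq n] in
@[simp]
lemma entrywiseNormSq_apply (B : Matrix m n 𝕜) (i : m) (j : n) :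
    entrywiseNormSq B i j = ‖B i j‖ ^ 2 := rfl

omit [Fintype n] in
@[simp]
lemma entrywiseNormSq_one : entrywiseNormSq (1 : Matrix n n 𝕜) = 1 := by
  ext i j
  rcases eq_or_ne i j with rfl | h <;> simp [*]

lemma entrywiseNormSq_mem_doublyStochastic {U : Matrix n n 𝕜} (hU : U ∈ unitaryGroup n 𝕜) :
    entrywiseNormSq U ∈ doublyStochastic ℝ n := by
  refine mem_doublyStochastic_iff_sum.mpr ⟨fun i j => sq_nonneg _, fun i => ?_, fun j => ?_⟩
  · have h := congrFun₂ ((mem_unitaryGroup_iff).mp hU) i i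
    simp only [mul_apply, star_apply, one_apply_eq, RCLike.star_def, RCLike.mul_conj] at h
    exact_mod_cast h
  · have h := congrFun₂ ((mem_unitaryGroup_iff').mp hU) j j
    simp only [mul_apply, star_apply, one_apply_eq, RCLike.star_def, RCLike.conj_mul] at h
    exact_mod_cast h

lemma mul_diagonal_mul_conjTranspose_apply_self (B : Matrix m n 𝕜) (a : n → ℝ) (j : m) :
    (B * diagonal (fun i => (a i : 𝕜)) * Bᴴ) j j = ((entrywiseNormSq B *ᵥ a) j : 𝕜) := by
  rw [mul_apply, mulVec, dotProduct]
  push_cast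
  refine Finset.sum_congr rfl fun i _ => ?_
  rw [mul_diagonal, conjTranspose_apply, RCLike.star_def, mul_right_comm, RCLike.mul_conj,
    entrywiseNormSq_apply]
  norm_cast

lemma trace_conj_diagonal_mul_conj_diagonal (U V : unitaryGroup n 𝕜) (a b : n → ℝ) :
    (((U : Matrix n n 𝕜) * diagonal (fun i => (a i : 𝕜)) * star (U : Matrix n n 𝕜)) *
        ((V : Matrix n n 𝕜) * diagonal (fun i => (b i : 𝕜)) * star (V : Matrix n n 𝕜))).trace =
      (((entrywiseNormSq (star (V : Matrix n n 𝕜) * (U : Matrix n n 𝕜)) *ᵥ a) ⬝ᵥ b : ℝ) : 𝕜) := by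
  set X := (U : Matrix n n 𝕜) * diagonal (fun i => (a i : 𝕜)) * star (U : Matrix n n 𝕜)
  set B := star (V : Matrix n n 𝕜) * (U : Matrix n n 𝕜)
  have hX : star (V : Matrix n n 𝕜) * X * (V : Matrix n n 𝕜) =
      B * diagonal (fun i => (a i : 𝕜)) * Bᴴ := by
    simp only [X, B, ← star_eq_conjTranspose, star_mul, star_star, Matrix.mul_assoc]
  rw [← Matrix.mul_assoc, trace_mul_cycle, ← Matrix.mul_assoc, hX, trace]
  simp only [diag_apply, mul_diagonal, mul_diagonal_mul_conjTranspose_apply_self, dotProduct]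
  push_cast
  rfl

end Unitary

section Hermitian

variable {𝕜 : Type*} [RCLike 𝕜] {n : Type*} [Fintype n] [DecidableEq n] {A C : Matrix n n 𝕜}

lemma Matrix.IsHermitian.eq_conj_diagonal_eigenvalues (hA : A.IsHermitian) :
    A = (hA.eigenvectorUnitary : Matrix n n 𝕜) * diagonal (fun i => (hA.eigenvalues i : 𝕜)) *
      star (hA.eigenvectorUnitary : Matrix n n 𝕜) :=
  hA.spectral_theorem

lemma Matrix.IsHermitian.trace_mul_eq (hA : A.IsHermitian) (hC : C.IsHermitian) :
    (A * C).trace = (((entrywiseNormSq (star (hC.eigenvectorUnitary : Matrix n n 𝕜) *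
      (hA.eigenvectorUnitary : Matrix n n 𝕜)) *ᵥ hA.eigenvalues) ⬝ᵥ hC.eigenvalues : ℝ) : 𝕜) := by
  conv_lhs => rw [hA.eq_conj_diagonal_eigenvalues, hC.eq_conj_diagonal_eigenvalues]
  exact trace_conj_diagonal_mul_conj_diagonal _ _ _ _

lemma Matrix.IsHermitian.sum_eigenvalues_eq_one (hA : A.IsHermitian) (htr : A.trace = 1) :
    ∑ i, hA.eigenvalues i = 1 := by
  exact_mod_cast hA.trace_eq_sum_eigenvalues.symm.trans htr

end Hermitian

lemma Matrix.IsHermitian.trace_exp {n : Type*} [Fintype n] [DecidableEq n]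
    {A : Matrix n n ℂ} (hA : A.IsHermitian) :
    (NormedSpace.exp A).trace = ((∑ i, Real.exp (hA.eigenvalues i) : ℝ) : ℂ) := by
  set U := hA.eigenvectorUnitary
  have hinv : star (U : Matrix n n ℂ) = (U : Matrix n n ℂ)⁻¹ :=
    (inv_eq_left_inv (Unitary.coe_star_mul_self U)).symm
  conv_lhs => rw [hA.eq_conj_diagonal_eigenvalues, hinv, exp_conj _ _ Unitary.isUnit_coe,
    trace_mul_cycle, ← hinv, Unitary.coe_star_mul_self, Matrix.one_mul, exp_diagonal,
    trace_diagonal]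
  push_cast
  simp only [Pi.coe_exp, Complex.exp_eq_exp_ℂ]
  rfl

lemma matLog_isHermitian {n : ℕ} (A : Matrix (Fin n) (Fin n) ℂ) : (matLog A).IsHermitian := by
  unfold matLog
  split_ifs with hA
  · exact isHermitian_mul_mul_conjTranspose _
      (isHermitian_diagonal_iff.mpr fun i => Complex.conj_ofReal _)
  · exact isHermitian_zero

lemma Matrix.IsHermitian.trace_mul_matLog_self {n : ℕ} {A : Matrix (Fin n) (Fin n) ℂ}
    (hA : A.IsHermitian) :
    (A * matLog A).trace = ((∑ i, hA.eigenvalues i * log (hA.eigenvalues i) : ℝ) : ℂ) := by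
  have h := trace_conj_diagonal_mul_conj_diagonal hA.eigenvectorUnitary hA.eigenvectorUnitary
    hA.eigenvalues (fun i => log (hA.eigenvalues i))
  rw [← hA.eq_conj_diagonal_eigenvalues, Unitary.coe_star_mul_self, entrywiseNormSq_one,
    one_mulVec] at h
  rw [matLog, dif_pos hA]
  exact h

theorem re_trace_mul_le_re_trace_mul_matLog_add_log_re_trace_exp {n : ℕ}
    {ρ H : Matrix (Fin n) (Fin n) ℂ} (hρ : ρ.PosSemidef) (hρtr : ρ.trace = 1)
    (hH : H.IsHermitian) :
    (ρ * H).trace.re ≤ (ρ * matLog ρ).trace.re + log (NormedSpace.exp H).trace.re := by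
  set p := hρ.1.eigenvalues
  set W := entrywiseNormSq (star (hH.eigenvectorUnitary : Matrix (Fin n) (Fin n) ℂ) *
    (hρ.1.eigenvectorUnitary : Matrix (Fin n) (Fin n) ℂ))
  have hW : W ∈ doublyStochastic ℝ (Fin n) := entrywiseNormSq_mem_doublyStochastic
    (Submonoid.mul_mem _ (Unitary.star_mem hH.eigenvectorUnitary.2) hρ.1.eigenvectorUnitary.2)
  have hp0 : ∀ i, 0 ≤ p i := hρ.eigenvalues_nonneg
  have hWp0 : ∀ j, 0 ≤ (W *ᵥ p) j := fun j =>
    dotProduct_nonneg_of_nonneg (fun i => nonneg_of_mem_doublyStochastic hW) hp0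
  have hWp1 : ∑ j, (W *ᵥ p) j = 1 :=
    (sum_mulVec_of_mem_doublyStochastic hW).trans (hρ.1.sum_eigenvalues_eq_one hρtr)
  have hρH : (ρ * H).trace.re = ∑ j, (W *ᵥ p) j * hH.eigenvalues j := by
    rw [hρ.1.trace_mul_eq hH]; rfl
  have hρρ : (ρ * matLog ρ).trace.re = ∑ i, p i * log (p i) := by
    rw [hρ.1.trace_mul_matLog_self]; rfl
  have hZ : (NormedSpace.exp H).trace.re = ∑ j, exp (hH.eigenvalues j) := by
    rw [hH.trace_exp]; rfl
  rw [hρH, hρρ, hZ]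
  have hgibbs := sum_mul_sub_sum_mul_log_le_log_sum_exp hWp0 hWp1 hH.eigenvalues
  have hmix := convexOn_mul_log.sum_map_mulVec_le hW (p := p) hp0
  linarith

theorem relEnt_triple_bound_general {n : ℕ} (ρ σ₁ σ₂ σ₃ : Matrix (Fin n) (Fin n) ℂ)
    (hρ : ρ.PosSemidef) (hρtr : ρ.trace = 1) :
    relEnt ρ σ₁ ≤ relEnt ρ σ₂ + relEnt ρ σ₃ +
      Real.log ((Matrix.trace
        (NormedSpace.exp (-(matLog σ₁) + matLog σ₂ + matLog σ₃))).re) := by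
  have hH : (-(matLog σ₁) + matLog σ₂ + matLog σ₃).IsHermitian :=
    ((matLog_isHermitian σ₁).neg.add (matLog_isHermitian σ₂)).add (matLog_isHermitian σ₃)
  have h := re_trace_mul_le_re_trace_mul_matLog_add_log_re_trace_exp hρ hρtr hH
  simp only [relEnt, Matrix.mul_sub, Matrix.mul_add, Matrix.mul_neg, trace_sub, trace_add,
    trace_neg, Complex.sub_re, Complex.add_re, Complex.neg_re] at h ⊢
  linarith

/-- For a density matrix `ρ` and positive definite density matrices
`σ₁, σ₂, σ₃`, one has
`D(ρ‖σ₁) ≤ D(ρ‖σ₂) + D(ρ‖σ₃) + log Tr[exp(-log σ₁ + log σ₂ + log σ₃)]`. -/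
theorem relEnt_triple_bound {n : ℕ} (ρ σ₁ σ₂ σ₃ : Matrix (Fin n) (Fin n) ℂ)
    (hρ : ρ.PosSemidef) (hρtr : ρ.trace = 1)
    (h1 : σ₁.PosDef) (h1tr : σ₁.trace = 1)
    (h2 : σ₂.PosDef) (h2tr : σ₂.trace = 1)
    (h3 : σ₃.PosDef) (h3tr : σ₃.trace = 1) :
    relEnt ρ σ₁ ≤ relEnt ρ σ₂ + relEnt ρ σ₃ +
      Real.log ((Matrix.trace
        (NormedSpace.exp (-(matLog σ₁) + matLog σ₂ + matLog σ₃))).re) :=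
  relEnt_triple_bound_general ρ σ₁ σ₂ σ₃ hρ hρtr
end

section
/- Let C denote the pinching onto diagonal matrices in the standard basis of ℂ^n, i.e. C(ρ) is the diagonal part of ρ. Then for every t ≥ 0 the dephasing semigroup satisfies exp(t(C − id))(ρ) = e^{−t}·ρ + (1 − e^{−t})·C(ρ), and for every positive definite density matrix ρ and t ≥ 0, D(e^{−t}ρ + (1 − e^{−t})C(ρ) ‖ C(ρ)) ≤ e^{−t}·D(ρ‖C(ρ)). In particular the dephasing semigroup generated by C − id contracts the relative entropy to the pinched state exponentially with rate 1 (modified logarithmic Sobolev constant 1/4). -/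
open scoped Matrix.Norms.L2Operator ComplexOrder


/-- The ring of continuous linear endomorphisms of the matrix algebra is a topological ring
(this registers an instance that is definitionally available but not found by synthesis). -/
instance matrixCLMTopologicalRing (n : ℕ) :
    IsTopologicalRing (Matrix (Fin n) (Fin n) ℂ →L[ℂ] Matrix (Fin n) (Fin n) ℂ) :=
  @NonUnitalSeminormedRing.toIsTopologicalRing
    (Matrix (Fin n) (Fin n) ℂ →L[ℂ] Matrix (Fin n) (Fin n) ℂ) inferInstance

/-- The pinching onto diagonal matrices in the standard basis, as a continuous linear map
on matrices: `C(ρ)` is the diagonal part of `ρ`. -/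
noncomputable def pinchCLM (n : ℕ) :
    Matrix (Fin n) (Fin n) ℂ →L[ℂ] Matrix (Fin n) (Fin n) ℂ :=
  LinearMap.toContinuousLinearMap
    { toFun := fun ρ => Matrix.diagonal fun i => ρ i i
      map_add' := by
        intro x y
        ext i j
        by_cases h : i = j <;> simp [Matrix.diagonal, h]
      map_smul' := by
        intro c x
        ext i j
        by_cases h : i = j <;> simp [Matrix.diagonal, h] }

/-!
The pinching `C` is idempotent, hence so is `1 - C`, and the exponential series of
`t (C - 1) = -t (1 - C)` collapses to `1 + (e^{-t} - 1)(1 - C)`.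

For the entropy bound put `σ = C ρ`, `a = e^{-t}` and `ω = a ρ + (1 - a) σ`. Since `log σ` is
diagonal, `Tr X log σ` only sees the diagonal of `X`; so `D(X‖C X) = S(X) - S(C X)` with
`S(X) = Tr X log X`, and `C ω = σ`. The claim thus becomes `S(ω) ≤ a S(ρ) + (1 - a) S(σ)`,
the convexity of `S`, which follows from Klein's inequality `Tr A - Tr B ≤ D(A‖B)` for
`A = ρ, σ` and `B = ω`.
-/

open NormedSpace

theorem exp_smul_of_isIdempotentElem {𝕂 A : Type*} [RCLike 𝕂] [NormedRing A] [NormedAlgebra 𝕂 A]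
    [CompleteSpace A] {Q : A} (hQ : IsIdempotentElem Q) (c : 𝕂) :
    exp (c • Q) = 1 + (exp c - 1) • Q := by
  have hpow (k : ℕ) : (c • Q) ^ (k + 1) = c ^ (k + 1) • Q := by
    rw [smul_pow, hQ.pow_succ_eq k]
  have hc := (summable_nat_add_iff 1).2 (expSeries_summable' (𝕂 := 𝕂) c)
  simp only [exp_eq_tsum 𝕂]
  rw [(expSeries_summable' (𝕂 := 𝕂) (c • Q)).tsum_eq_zero_add,
    (expSeries_summable' (𝕂 := 𝕂) c).tsum_eq_zero_add]
  simp only [hpow, smul_smul, ← smul_eq_mul, hc.tsum_smul_const]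
  simp

section MatrixLemmas

variable {m : Type*} [Fintype m] [DecidableEq m]

lemma diagonal_comp_mul_eq_mul_diagonal_comp {K : Type*} [CommRing K] [NoZeroDivisors K]
    {U : Matrix m m K} {d e : m → K} (h : Matrix.diagonal d * U = U * Matrix.diagonal e)
    (g : K → K) : Matrix.diagonal (g ∘ d) * U = U * Matrix.diagonal (g ∘ e) := by
  ext i j
  have hij := congrFun (congrFun h i) j
  simp only [Matrix.diagonal_mul, Matrix.mul_diagonal, Function.comp_apply] at hij ⊢
  rcases eq_or_ne (U i j) 0 with hU | hU
  · simp [hU]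
  · rw [mul_comm, mul_left_cancel₀ hU ((mul_comm _ _).trans hij)]

lemma trace_mul_diagonal (X : Matrix m m ℂ) (g : m → ℂ) :
    (X * Matrix.diagonal g).trace = ∑ i, X i i * g i := by
  simp [Matrix.trace, Matrix.mul_diagonal]

lemma sum_normSq_row_eq_one (U : Matrix.unitaryGroup m ℂ) (i : m) :
    ∑ j, Complex.normSq ((U : Matrix m m ℂ) i j) = 1 := by
  have h := congrArg Complex.re (congrFun (congrFun (Matrix.mem_unitaryGroup_iff.mp U.2) i) i)
  simpa [Matrix.mul_apply, Complex.mul_conj, Complex.re_sum] using h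

lemma sum_normSq_col_eq_one (U : Matrix.unitaryGroup m ℂ) (j : m) :
    ∑ i, Complex.normSq ((U : Matrix m m ℂ) i j) = 1 := by
  simpa using sum_normSq_row_eq_one (star U) j

lemma trace_conj_diagonal_mul_conj_diagonal_s8 (U V : Matrix.unitaryGroup m ℂ) (a c : m → ℂ) :
    ((U : Matrix m m ℂ) * Matrix.diagonal a * star (U : Matrix m m ℂ) *
        ((V : Matrix m m ℂ) * Matrix.diagonal c * star (V : Matrix m m ℂ))).trace =
      ∑ i, ∑ j, a i * c j * Complex.normSq ((star (U : Matrix m m ℂ) * V) i j) := by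
  set W := star (U : Matrix m m ℂ) * V
  have hconj : (U : Matrix m m ℂ) * Matrix.diagonal a * star (U : Matrix m m ℂ) *
        ((V : Matrix m m ℂ) * Matrix.diagonal c * star (V : Matrix m m ℂ)) =
      U * (Matrix.diagonal a * W * Matrix.diagonal c * star W) * star (U : Matrix m m ℂ) := by
    simp only [W, star_mul, star_star, Matrix.mul_assoc,
      Matrix.mem_unitaryGroup_iff.mp U.2, Matrix.mul_one]
  rw [hconj, Matrix.trace_mul_cycle, ← Matrix.mul_assoc, Unitary.coe_star_mul_self, one_mul]
  simp only [Matrix.trace, Matrix.diag, Matrix.mul_apply, Matrix.diagonal_apply, Matrix.star_apply,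
    ite_mul, zero_mul, mul_ite, mul_zero, Finset.sum_ite_eq, Finset.sum_ite_eq', Finset.mem_univ,
    if_true]
  refine Finset.sum_congr rfl fun i _ => Finset.sum_congr rfl fun j _ => ?_
  rw [← Complex.mul_conj, ← Complex.star_def]
  ring

end MatrixLemmas

lemma convex_setOf_posDef {m : Type*} : Convex ℝ {A : Matrix m m ℂ | A.PosDef} := by
  intro x hx y hy a b ha hb hab
  simp only [Set.mem_ofPred_eq, ← Complex.coe_smul] at hx hy ⊢
  rcases ha.eq_or_lt with rfl | ha
  · simpa [show b = 1 by linarith] using hy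
  · exact (hx.smul (Complex.zero_lt_real.mpr ha)).add_posSemidef
      (hy.posSemidef.smul (Complex.zero_le_real.mpr hb))

lemma sub_le_mul_sub_log {a b : ℝ} (ha : 0 ≤ a) (hb : 0 < b) :
    a - b ≤ a * (Real.log a - Real.log b) := by
  rcases ha.eq_or_lt with rfl | ha
  · simpa using hb.le
  · have h := mul_le_mul_of_nonneg_left (Real.log_le_sub_one_of_pos (div_pos hb ha)) ha.le
    rw [Real.log_div hb.ne' ha.ne', mul_sub_one, mul_div_cancel₀ _ ha.ne'] at h
    linarith

section Pinching

variable {n : ℕ}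

lemma pinchCLM_apply (ρ : Matrix (Fin n) (Fin n) ℂ) :
    pinchCLM n ρ = Matrix.diagonal fun i => ρ i i := rfl

lemma pinchCLM_pinchCLM (ρ : Matrix (Fin n) (Fin n) ℂ) :
    pinchCLM n (pinchCLM n ρ) = pinchCLM n ρ := by
  simp [pinchCLM_apply]

lemma isIdempotentElem_pinchCLM (n : ℕ) : IsIdempotentElem (pinchCLM n) :=
  ContinuousLinearMap.ext pinchCLM_pinchCLM

lemma posDef_pinchCLM {ρ : Matrix (Fin n) (Fin n) ℂ} (hρ : ρ.PosDef) : (pinchCLM n ρ).PosDef :=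
  Matrix.posDef_diagonal_iff.mpr fun _ => hρ.diag_pos

lemma exp_smul_pinchCLM_sub_one_apply (t : ℝ) (ρ : Matrix (Fin n) (Fin n) ℂ) :
    exp ((t : ℂ) • (pinchCLM n - 1)) ρ =
      (Real.exp (-t) : ℂ) • ρ + ((1 - Real.exp (-t) : ℝ) : ℂ) • pinchCLM n ρ := by
  have hgen : (t : ℂ) • (pinchCLM n - 1) = (-t : ℂ) • (1 - pinchCLM n) := by module
  have hexp := exp_smul_of_isIdempotentElem (𝕂 := ℂ)
    (A := Matrix (Fin n) (Fin n) ℂ →L[ℂ] Matrix (Fin n) (Fin n) ℂ)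
    (isIdempotentElem_pinchCLM n).one_sub (-t)
  rw [hgen, hexp, ← Complex.exp_eq_exp_ℂ, ← Complex.ofReal_neg, ← Complex.ofReal_exp]
  simp only [add_apply, smul_apply, sub_apply, one_apply_eq_self]
  push_cast
  module

end Pinching

section Entropy

variable {n : ℕ}

lemma matLog_diagonal (d : Fin n → ℝ) :
    matLog (Matrix.diagonal fun i => (d i : ℂ)) =
      Matrix.diagonal fun i => (Real.log (d i) : ℂ) := by
  set D : Matrix (Fin n) (Fin n) ℂ := Matrix.diagonal fun i => (d i : ℂ)
  have hD : D.IsHermitian := Matrix.isHermitian_diagonal_iff.mpr fun i => by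
    simp [IsSelfAdjoint, Complex.conj_ofReal]
  set U : Matrix (Fin n) (Fin n) ℂ := ↑hD.eigenvectorUnitary
  have hDU : D * U = U * Matrix.diagonal (RCLike.ofReal ∘ hD.eigenvalues) := by
    have h := hD.spectral_theorem
    rw [Unitary.conjStarAlgAut_apply] at h
    calc D * U = U * Matrix.diagonal (RCLike.ofReal ∘ hD.eigenvalues) * star U * U :=
          congrArg (· * U) h
      _ = _ := by rw [mul_assoc, Unitary.coe_star_mul_self, mul_one]
  have hlog := diagonal_comp_mul_eq_mul_diagonal_comp hDU fun z => (Real.log z.re : ℂ)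
  simp only [Function.comp_def, RCLike.ofReal_eq_complex_ofReal, Complex.ofReal_re] at hlog
  rw [matLog, dif_pos hD, ← hlog, mul_assoc, Matrix.mem_unitaryGroup_iff.mp hD.eigenvectorUnitary.2,
    mul_one]

lemma trace_mul_matLog_pinchCLM {Y : Matrix (Fin n) (Fin n) ℂ} (hY : Y.IsHermitian)
    (X : Matrix (Fin n) (Fin n) ℂ) :
    (X * matLog (pinchCLM n Y)).trace = (pinchCLM n X * matLog (pinchCLM n Y)).trace := by
  have hCY : pinchCLM n Y = Matrix.diagonal fun i => ((Y i i).re : ℂ) := by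
    rw [pinchCLM_apply]
    exact congrArg Matrix.diagonal (funext fun i => (hY.coe_re_apply_self i).symm)
  simp only [hCY, matLog_diagonal, trace_mul_diagonal, pinchCLM_apply, Matrix.diagonal_apply_eq]

noncomputable def negEntropy (A : Matrix (Fin n) (Fin n) ℂ) : ℝ :=
  (A * matLog A).trace.re

lemma relEnt_eq_negEntropy_sub (A B : Matrix (Fin n) (Fin n) ℂ) :
    relEnt A B = negEntropy A - (A * matLog B).trace.re := by
  rw [relEnt, negEntropy, Matrix.mul_sub, Matrix.trace_sub, Complex.sub_re]

lemma relEnt_pinchCLM {X : Matrix (Fin n) (Fin n) ℂ} (hX : X.IsHermitian) :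
    relEnt X (pinchCLM n X) = negEntropy X - negEntropy (pinchCLM n X) := by
  rw [relEnt_eq_negEntropy_sub, trace_mul_matLog_pinchCLM hX]
  rfl

lemma re_trace_mul_matLog {A B : Matrix (Fin n) (Fin n) ℂ} (hA : A.IsHermitian)
    (hB : B.IsHermitian) :
    (A * matLog B).trace.re =
      ∑ i, ∑ j, Complex.normSq ((star (hA.eigenvectorUnitary : Matrix (Fin n) (Fin n) ℂ) *
          hB.eigenvectorUnitary) i j) * (hA.eigenvalues i * Real.log (hB.eigenvalues j)) := by
  conv_lhs => rw [hA.spectral_theorem, Unitary.conjStarAlgAut_apply, matLog, dif_pos hB]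
  rw [trace_conj_diagonal_mul_conj_diagonal_s8, Complex.re_sum]
  refine Finset.sum_congr rfl fun i _ => ?_
  rw [Complex.re_sum]
  refine Finset.sum_congr rfl fun j _ => ?_
  simp only [Function.comp_apply, RCLike.ofReal_eq_complex_ofReal, ← Complex.ofReal_mul,
    Complex.ofReal_re]
  ring

lemma negEntropy_eq_sum_eigenvalues {A : Matrix (Fin n) (Fin n) ℂ} (hA : A.IsHermitian) :
    negEntropy A = ∑ i, hA.eigenvalues i * Real.log (hA.eigenvalues i) := by
  rw [negEntropy, re_trace_mul_matLog hA hA, Unitary.coe_star_mul_self]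
  simp [Matrix.one_apply, apply_ite Complex.normSq]

lemma re_trace_eq_sum_eigenvalues {A : Matrix (Fin n) (Fin n) ℂ} (hA : A.IsHermitian) :
    A.trace.re = ∑ i, hA.eigenvalues i := by
  simp [hA.trace_eq_sum_eigenvalues, Complex.re_sum]

/-- Klein's inequality. In eigenbases of `A` and `B` both sides are sums weighted by the doubly
stochastic matrix `|(U_A⋆ U_B) i j|²`, and the terms compare by `sub_le_mul_sub_log`. -/
theorem re_trace_sub_le_relEnt {A B : Matrix (Fin n) (Fin n) ℂ} (hA : A.PosSemidef)
    (hB : B.PosDef) : (A.trace - B.trace).re ≤ relEnt A B := by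
  set W : Matrix.unitaryGroup (Fin n) ℂ := star hA.1.eigenvectorUnitary * hB.1.eigenvectorUnitary
  set α := hA.1.eigenvalues
  set β := hB.1.eigenvalues
  have hAB : (A * matLog B).trace.re =
      ∑ i, ∑ j, Complex.normSq (W i j) * (α i * Real.log (β j)) :=
    re_trace_mul_matLog hA.1 hB.1
  have hAA : negEntropy A = ∑ i, ∑ j, Complex.normSq (W i j) * (α i * Real.log (α i)) := by
    simp only [negEntropy_eq_sum_eigenvalues hA.1, ← Finset.sum_mul, sum_normSq_row_eq_one,
      one_mul, α]
  have htrA : A.trace.re = ∑ i, ∑ j, Complex.normSq (W i j) * α i := by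
    simp only [re_trace_eq_sum_eigenvalues hA.1, ← Finset.sum_mul, sum_normSq_row_eq_one,
      one_mul, α]
  have htrB : B.trace.re = ∑ i, ∑ j, Complex.normSq (W i j) * β j := by
    rw [re_trace_eq_sum_eigenvalues hB.1, Finset.sum_comm]
    simp only [← Finset.sum_mul, sum_normSq_col_eq_one, one_mul, β]
  rw [Complex.sub_re, relEnt_eq_negEntropy_sub, hAA, hAB, htrA, htrB, ← Finset.sum_sub_distrib,
    ← Finset.sum_sub_distrib]
  refine Finset.sum_le_sum fun i _ => ?_
  rw [← Finset.sum_sub_distrib, ← Finset.sum_sub_distrib]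
  refine Finset.sum_le_sum fun j _ => ?_
  rw [← mul_sub, ← mul_sub, ← mul_sub]
  exact mul_le_mul_of_nonneg_left
    (sub_le_mul_sub_log (hA.eigenvalues_nonneg i) (hB.eigenvalues_pos j)) (Complex.normSq_nonneg _)

theorem negEntropy_convexOn (n : ℕ) :
    ConvexOn ℝ {A : Matrix (Fin n) (Fin n) ℂ | A.PosDef} negEntropy := by
  refine ⟨convex_setOf_posDef, fun x hx y hy a b ha hb hab => ?_⟩
  set ω := a • x + b • y
  have hω : ω.PosDef := convex_setOf_posDef hx hy ha hb hab
  have hkx := re_trace_sub_le_relEnt hx.posSemidef hω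
  have hky := re_trace_sub_le_relEnt hy.posSemidef hω
  rw [relEnt_eq_negEntropy_sub] at hkx hky
  have hsplit : negEntropy ω =
      a * (x * matLog ω).trace.re + b * (y * matLog ω).trace.re := by
    simp [negEntropy, ω, Matrix.add_mul, Matrix.trace_add, Matrix.trace_smul]
  have htr : ω.trace.re = a * x.trace.re + b * y.trace.re := by
    simp [ω, Matrix.trace_add, Matrix.trace_smul]
  simp only [Complex.sub_re, htr] at hkx hky
  obtain rfl : b = 1 - a := by linarith
  rw [hsplit, smul_eq_mul, smul_eq_mul]
  nlinarith [mul_le_mul_of_nonneg_left hkx ha, mul_le_mul_of_nonneg_left hky hb]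

theorem relEnt_convexComb_pinchCLM_le {ρ : Matrix (Fin n) (Fin n) ℂ} (hρ : ρ.PosDef) {a : ℝ}
    (ha₀ : 0 ≤ a) (ha₁ : a ≤ 1) :
    relEnt (a • ρ + (1 - a) • pinchCLM n ρ) (pinchCLM n ρ) ≤ a * relEnt ρ (pinchCLM n ρ) := by
  set σ := pinchCLM n ρ
  have hσ : σ.PosDef := posDef_pinchCLM hρ
  have hω : (a • ρ + (1 - a) • σ).PosDef :=
    convex_setOf_posDef hρ hσ ha₀ (sub_nonneg.mpr ha₁) (by ring)
  have hpinch : pinchCLM n (a • ρ + (1 - a) • σ) = σ := by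
    rw [map_add, LinearMapClass.map_smul_of_tower, LinearMapClass.map_smul_of_tower,
      pinchCLM_pinchCLM, ← add_smul, add_sub_cancel, one_smul]
  calc relEnt (a • ρ + (1 - a) • σ) σ
      = negEntropy (a • ρ + (1 - a) • σ) - negEntropy σ := by
        simpa only [hpinch] using relEnt_pinchCLM hω.1
    _ ≤ a * negEntropy ρ + (1 - a) * negEntropy σ - negEntropy σ :=
        sub_le_sub_right ((negEntropy_convexOn n).2 hρ hσ ha₀ (sub_nonneg.mpr ha₁) (by ring)) _
    _ = a * relEnt ρ σ := by rw [relEnt_pinchCLM hρ.1]; ring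

end Entropy

/-- The dephasing semigroup `exp (t (C - id))` generated by the pinching `C`
onto diagonal matrices is explicitly `e^{-t} ρ + (1 - e^{-t}) C(ρ)`, and it contracts the
relative entropy to the pinched state exponentially fast with rate `1`:
`D(e^{-t} ρ + (1-e^{-t}) C(ρ) ‖ C(ρ)) ≤ e^{-t} D(ρ ‖ C(ρ))` for every positive definite
density matrix `ρ` and every `t ≥ 0`. -/
theorem dephasing_semigroup_entropy_decay {n : ℕ} :
    (∀ t : ℝ, 0 ≤ t → ∀ ρ : Matrix (Fin n) (Fin n) ℂ,
      NormedSpace.exp ((t : ℂ) • (pinchCLM n - 1)) ρ =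
        (Real.exp (-t) : ℂ) • ρ + ((1 - Real.exp (-t) : ℝ) : ℂ) • pinchCLM n ρ) ∧
    (∀ t : ℝ, 0 ≤ t → ∀ ρ : Matrix (Fin n) (Fin n) ℂ, ρ.PosDef → ρ.trace = 1 →
      relEnt ((Real.exp (-t) : ℂ) • ρ + ((1 - Real.exp (-t) : ℝ) : ℂ) • pinchCLM n ρ)
          (pinchCLM n ρ) ≤
        Real.exp (-t) * relEnt ρ (pinchCLM n ρ)) := by
  refine ⟨fun t _ ρ => exp_smul_pinchCLM_sub_one_apply t ρ, fun t ht ρ hρ _ => ?_⟩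
  simp only [Complex.coe_smul]
  exact relEnt_convexComb_pinchCLM_le hρ (Real.exp_pos _).le (Real.exp_le_one_iff.mpr (by linarith))
end

section
/- Let H = ℂ^a ⊗ ℂ^b ⊗ ℂ^r be a tripartite finite-dimensional space (matrices on H indexed by a×b×r via Kronecker products), σ a positive definite density matrix on H, P a matrix on ℂ^r with 0 ≤ P ≤ 1 and Tr[(1⊗1⊗P)σ] > 0, and ε ≥ 0. For a positive semidefinite Q on H with Tr[Qσ] > 0, write σ^Q := Q^{1/2}·σ·Q^{1/2} / Tr[Qσ]. Assume: for every positive semidefinite N on ℂ^a and all P_B, P'_B on ℂ^b with 0 ≤ P_B ≤ 1, 0 ≤ P'_B ≤ 1, Tr[(1⊗P_B⊗P)σ] > 0 and Tr[(1⊗P'_B⊗P)σ] > 0, one has |Tr[σ^{1⊗P_B⊗P}(N⊗1⊗1)] − Tr[σ^{1⊗P'_B⊗P}(N⊗1⊗1)]| ≤ ε·Tr[σ^{1⊗P'_B⊗P}(N⊗1⊗1)]. Then, writing τ := σ^{1⊗1⊗P}, for all Hermitian X on ℂ^a and Y on ℂ^b: |Tr[τ(X⊗Y⊗1)] − Tr[τ(X⊗1⊗1)]·Tr[τ(1⊗Y⊗1)]|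 ≤ 4ε·(Tr[τ(X²⊗1⊗1)])^{1/2}·(Tr[τ(1⊗Y²⊗1)])^{1/2}. -/
open scoped Matrix.Norms.L2Operator ComplexOrder Matrix Kronecker

/-- The positive semidefinite square root of a positive semidefinite matrix
(the definition `Matrix.PosSemidef.sqrt` of the older Mathlib, since removed). -/
noncomputable def Matrix.PosSemidef.sqrt {n : Type*} [Fintype n] [DecidableEq n]
    {𝕜 : Type*} [RCLike 𝕜] {A : Matrix n n 𝕜} (hA : A.PosSemidef) : Matrix n n 𝕜 :=
  hA.1.eigenvectorUnitary.1 * Matrix.diagonal ((↑) ∘ (√·) ∘ hA.1.eigenvalues) *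
  (star hA.1.eigenvectorUnitary : Matrix n n 𝕜)

open Classical in
/-- The post-selected state `σ^Q = Q^{1/2} σ Q^{1/2} / Tr[Q σ]` after a test `Q`
(with junk value `0` if `Q` is not positive semidefinite). -/
noncomputable def postSelect {ι : Type*} [Fintype ι] [DecidableEq ι]
    (σ Q : Matrix ι ι ℂ) : Matrix ι ι ℂ :=
  if hQ : Q.PosSemidef then (Matrix.trace (Q * σ))⁻¹ • (hQ.sqrt * σ * hQ.sqrt) else 0

/-!
Diagonalize `X = ∑ⱼ xⱼ Rⱼ` and `Y = ∑ᵢ yᵢ Qᵢ` by spectral projections. The tests `1 ⊗ Qᵢ ⊗ P`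
commute with the observables `Rⱼ ⊗ 1 ⊗ 1`, so `μ j i = Tr[τ (Rⱼ ⊗ Qᵢ ⊗ 1)]` is a probability
distribution whose conditional law of `j` given `i` is the law of the `Rⱼ` in the post-selected
state `σ^{1 ⊗ Qᵢ ⊗ P}`. The hypothesis with `N = Rⱼ`, `P_B = Qᵢ`, `P'_B = 1` says that this
conditional law is within relative error `ε` of the marginal, i.e.
`|μ j i - μ_A j μ_B i| ≤ ε μ_A j μ_B i`. Summing against `xⱼ yᵢ` and applying Cauchy–Schwarz to
each marginal bounds the covariance by `ε ‖x‖_{L²(μ_A)} ‖y‖_{L²(μ_B)}`, which is even better than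
the claimed `4ε`.
-/

open Matrix

namespace Matrix.PosSemidef

variable {n 𝕜 : Type*} [Fintype n] [DecidableEq n] [RCLike 𝕜] {A : Matrix n n 𝕜}

lemma sqrt_eq_cfc (hA : A.PosSemidef) : hA.sqrt = cfc Real.sqrt A := by
  rw [hA.1.cfc_eq, IsHermitian.cfc, Unitary.conjStarAlgAut_apply]
  rfl

open scoped MatrixOrder in
lemma sqrt_mul_sqrt (hA : A.PosSemidef) : hA.sqrt * hA.sqrt = A := by
  rw [sqrt_eq_cfc, ← cfc_mul ..]
  conv_rhs => rw [← cfc_id' ℝ A (ha := hA.1.isSelfAdjoint)]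
  exact cfc_congr fun x hx => Real.mul_self_sqrt (spectrum_nonneg_of_nonneg hA.nonneg hx)

lemma commute_sqrt (hA : A.PosSemidef) {B : Matrix n n 𝕜} (h : Commute A B) :
    Commute hA.sqrt B := by
  rw [sqrt_eq_cfc]
  exact h.cfc_real _

open scoped MatrixOrder in
lemma trace_mul_nonneg {A B : Matrix n n 𝕜} (hA : A.PosSemidef) (hB : B.PosSemidef) :
    0 ≤ trace (A * B) := by
  obtain ⟨C, rfl⟩ := CStarAlgebra.nonneg_iff_eq_star_mul_self.mp hB.nonneg
  rw [← mul_assoc, trace_mul_comm, ← mul_assoc]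
  exact (hA.mul_mul_conjTranspose_same C).trace_nonneg

end Matrix.PosSemidef

namespace Matrix.IsHermitian

variable {n 𝕜 : Type*} [Fintype n] [DecidableEq n] [RCLike 𝕜] {X : Matrix n n 𝕜}

noncomputable def spectralProj (hX : X.IsHermitian) (j : n) : Matrix n n 𝕜 :=
  Unitary.conjStarAlgAut 𝕜 _ hX.eigenvectorUnitary (diagonal (Pi.single j 1 : n → 𝕜))

lemma sum_smul_spectralProj (hX : X.IsHermitian) (f : ℝ → ℝ) :
    ∑ j, f (hX.eigenvalues j) • hX.spectralProj j = cfc f X := by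
  have hdiag : ∑ j, (f (hX.eigenvalues j) : 𝕜) • diagonal (Pi.single j 1 : n → 𝕜) =
      diagonal (RCLike.ofReal ∘ f ∘ hX.eigenvalues) := by
    ext i k
    rcases eq_or_ne i k with rfl | h <;>
      simp [Pi.single_apply, Matrix.sum_apply, RCLike.real_smul_eq_coe_mul, *]
  simp_rw [hX.cfc_eq, IsHermitian.cfc, ← hdiag, map_sum, map_smul, spectralProj,
    RCLike.real_smul_eq_coe_smul (K := 𝕜)]

lemma sum_spectralProj (hX : X.IsHermitian) : ∑ j, hX.spectralProj j = 1 := by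
  simpa [cfc_const_one ℝ X hX.isSelfAdjoint] using hX.sum_smul_spectralProj fun _ => 1

lemma sum_eigenvalues_smul_spectralProj (hX : X.IsHermitian) :
    ∑ j, hX.eigenvalues j • hX.spectralProj j = X := by
  simpa [cfc_id' ℝ X hX.isSelfAdjoint] using hX.sum_smul_spectralProj fun x => x

lemma sum_eigenvalues_sq_smul_spectralProj (hX : X.IsHermitian) :
    ∑ j, hX.eigenvalues j ^ 2 • hX.spectralProj j = X * X := by
  rw [hX.sum_smul_spectralProj (· ^ 2), cfc_pow_id X 2 hX.isSelfAdjoint, sq]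

open scoped MatrixOrder in
lemma posSemidef_spectralProj (hX : X.IsHermitian) (j : n) :
    (hX.spectralProj j).PosSemidef := by
  have hD : (diagonal (Pi.single j 1 : n → 𝕜)).PosSemidef :=
    posSemidef_diagonal_iff.2 fun i => by rcases eq_or_ne i j with rfl | h <;> simp [*]
  exact (map_nonneg (Unitary.conjStarAlgAut 𝕜 _ hX.eigenvectorUnitary) hD.nonneg).posSemidef

end Matrix.IsHermitian

lemma Matrix.posSemidef_one_sub_of_sum_eq_one {ι n 𝕜 : Type*} [Fintype ι] [DecidableEq ι]
    [Fintype n] [DecidableEq n] [RCLike 𝕜]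
    {A : ι → Matrix n n 𝕜} (hA : ∀ i, (A i).PosSemidef) (hsum : ∑ i, A i = 1) (j : ι) :
    (1 - A j).PosSemidef := by
  rw [← hsum, ← Finset.sum_erase_eq_sub (Finset.mem_univ j)]
  exact posSemidef_sum _ fun i _ => hA i

section PostSelect

variable {ι : Type*} [Fintype ι] [DecidableEq ι] {σ Q M : Matrix ι ι ℂ}

lemma trace_postSelect_mul (hQ : Q.PosSemidef) (hQM : Commute Q M) :
    trace (postSelect σ Q * M) = (trace (Q * σ))⁻¹ * trace (M * Q * σ) := by
  rw [postSelect, dif_pos hQ, smul_mul, trace_smul, smul_eq_mul]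
  congr 1
  calc trace (hQ.sqrt * σ * hQ.sqrt * M)
      = trace (σ * (hQ.sqrt * M) * hQ.sqrt) := by
        rw [mul_assoc, mul_assoc, trace_mul_comm, mul_assoc]
    _ = trace (M * Q * σ) := by
        rw [(hQ.commute_sqrt hQM).eq, mul_assoc, mul_assoc, hQ.sqrt_mul_sqrt, trace_mul_comm,
          mul_assoc]

lemma re_trace_postSelect_mul (hσ : σ.PosSemidef) (hQ : Q.PosSemidef) (hQM : Commute Q M) :
    (trace (postSelect σ Q * M)).re = (trace (M * Q * σ)).re / (trace (Q * σ)).re := by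
  have hreal : trace (Q * σ) = ((trace (Q * σ)).re : ℂ) :=
    Complex.ext rfl (Complex.nonneg_iff.1 (hQ.trace_mul_nonneg hσ)).2.symm
  rw [trace_postSelect_mul hQ hQM, hreal, ← Complex.ofReal_inv, Complex.re_ofReal_mul,
    Complex.ofReal_re, div_eq_inv_mul]

end PostSelect

section Tripartite

variable {l m n : Type*} [Fintype l] [Fintype m] [Fintype n]
  [DecidableEq l] [DecidableEq m] [DecidableEq n]
  {σ : Matrix (l × m × n) (l × m × n) ℂ} {P : Matrix n n ℂ}

lemma re_trace_postSelect_kronecker (hσ : σ.PosSemidef) (hP : P.PosSemidef)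
    {V M : Matrix m m ℂ} (hV : V.PosSemidef) (hVM : Commute V M) (W : Matrix l l ℂ) :
    (trace (postSelect σ (1 ⊗ₖ (V ⊗ₖ P)) * (W ⊗ₖ (M ⊗ₖ 1)))).re =
      (trace ((W ⊗ₖ ((M * V) ⊗ₖ P)) * σ)).re / (trace ((1 ⊗ₖ (V ⊗ₖ P)) * σ)).re := by
  have hQM : Commute (1 ⊗ₖ (V ⊗ₖ P)) (W ⊗ₖ (M ⊗ₖ 1)) := by
    simp only [Commute, SemiconjBy, ← mul_kronecker_mul, one_mul, mul_one, hVM.eq]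
  rw [re_trace_postSelect_mul hσ (PosSemidef.one.kronecker (hV.kronecker hP)) hQM,
    ← mul_kronecker_mul, ← mul_kronecker_mul, mul_one, one_mul]

noncomputable def kronPairing (τ : Matrix (l × m × n) (l × m × n) ℂ) (C : Matrix n n ℂ) :
    Matrix l l ℂ →ₗ[ℝ] Matrix m m ℂ →ₗ[ℝ] ℝ :=
  LinearMap.mk₂ ℝ (fun W V => (trace (τ * (W ⊗ₖ (V ⊗ₖ C)))).re)
    (fun _ _ _ => by simp only [add_kronecker, mul_add, trace_add, Complex.add_re])
    (fun _ _ _ => by simp only [smul_kronecker, Matrix.mul_smul, trace_smul, Complex.smul_re])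
    (fun _ _ _ => by simp only [add_kronecker, kronecker_add, mul_add, trace_add, Complex.add_re])
    (fun _ _ _ => by
      simp only [smul_kronecker, kronecker_smul, Matrix.mul_smul, trace_smul, Complex.smul_re])

lemma kronPairing_postSelect (hσ : σ.PosSemidef) (hP : P.PosSemidef) (W : Matrix l l ℂ)
    (V : Matrix m m ℂ) :
    kronPairing (postSelect σ (1 ⊗ₖ (1 ⊗ₖ P))) 1 W V =
      (trace ((W ⊗ₖ (V ⊗ₖ P)) * σ)).re / (trace ((1 ⊗ₖ (1 ⊗ₖ P)) * σ)).re := by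
  have h := re_trace_postSelect_kronecker hσ hP PosSemidef.one (Commute.one_left V) W
  rwa [mul_one] at h

lemma kronPairing_postSelect_nonneg (hσ : σ.PosSemidef) (hP : P.PosSemidef)
    {W : Matrix l l ℂ} {V : Matrix m m ℂ} (hW : W.PosSemidef) (hV : V.PosSemidef) :
    0 ≤ kronPairing (postSelect σ (1 ⊗ₖ (1 ⊗ₖ P))) 1 W V := by
  rw [kronPairing_postSelect hσ hP]
  exact div_nonneg
    (Complex.nonneg_iff.1 ((hW.kronecker (hV.kronecker hP)).trace_mul_nonneg hσ)).1
    (Complex.nonneg_iff.1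
      ((PosSemidef.one.kronecker (PosSemidef.one.kronecker hP)).trace_mul_nonneg hσ)).1

lemma kronPairing_postSelect_one_one (hσ : σ.PosSemidef) (hP : P.PosSemidef)
    (hPσ : 0 < (trace ((1 ⊗ₖ (1 ⊗ₖ P)) * σ)).re) :
    kronPairing (postSelect σ (1 ⊗ₖ (1 ⊗ₖ P))) (1 : Matrix n n ℂ) (1 : Matrix l l ℂ)
      (1 : Matrix m m ℂ) = 1 := by
  rw [kronPairing_postSelect hσ hP, div_self hPσ.ne']

lemma trace_pos_of_kronPairing_postSelect_pos (hσ : σ.PosSemidef) (hP : P.PosSemidef)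
    (hPσ : 0 < (trace ((1 ⊗ₖ (1 ⊗ₖ P)) * σ)).re) {V : Matrix m m ℂ}
    (h : 0 < kronPairing (postSelect σ (1 ⊗ₖ (1 ⊗ₖ P))) 1 (1 : Matrix l l ℂ) V) :
    0 < (trace ((1 ⊗ₖ (V ⊗ₖ P)) * σ)).re := by
  rwa [kronPairing_postSelect hσ hP, div_pos_iff_of_pos_right hPσ] at h

lemma re_trace_postSelect_kronecker_eq_div (hσ : σ.PosSemidef) (hP : P.PosSemidef)
    (hPσ : 0 < (trace ((1 ⊗ₖ (1 ⊗ₖ P)) * σ)).re) {V : Matrix m m ℂ} (hV : V.PosSemidef)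
    (W : Matrix l l ℂ) :
    (trace (postSelect σ (1 ⊗ₖ (V ⊗ₖ P)) * (W ⊗ₖ (1 ⊗ₖ 1)))).re =
      kronPairing (postSelect σ (1 ⊗ₖ (1 ⊗ₖ P))) 1 W V /
        kronPairing (postSelect σ (1 ⊗ₖ (1 ⊗ₖ P))) 1 1 V := by
  rw [re_trace_postSelect_kronecker hσ hP hV (Commute.one_right V) W, one_mul,
    kronPairing_postSelect hσ hP, kronPairing_postSelect hσ hP,
    div_div_div_cancel_right₀ hPσ.ne']

end Tripartite

section JointLaw

variable {ι κ : Type*} [Fintype ι] [Fintype κ] {μ : ι → κ → ℝ} {ε : ℝ}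

lemma sum_abs_mul_le_sqrt_sum_sq_mul {w : ι → ℝ} (hw : ∀ j, 0 ≤ w j) (hw1 : ∑ j, w j = 1)
    (x : ι → ℝ) : ∑ j, |x j| * w j ≤ √(∑ j, x j ^ 2 * w j) := by
  have h := Real.pow_arith_mean_le_arith_mean_pow Finset.univ w (fun j => |x j|)
    (fun j _ => hw j) hw1 (fun j _ => abs_nonneg _) 2
  simp only [sq_abs, mul_comm (w _)] at h
  exact (le_abs_self _).trans (Real.abs_le_sqrt h)

lemma abs_sub_mul_marginals_le (hμ : ∀ j i, 0 ≤ μ j i)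
    (hcond : ∀ j i, 0 < ∑ j', μ j' i →
      |μ j i / ∑ j', μ j' i - ∑ i', μ j i'| ≤ ε * ∑ i', μ j i')
    (j : ι) (i : κ) :
    |μ j i - (∑ i', μ j i') * ∑ j', μ j' i| ≤ ε * ((∑ i', μ j i') * ∑ j', μ j' i) := by
  rcases (Finset.sum_nonneg fun j' _ => hμ j' i).eq_or_lt with hB | hB
  · have hμji : μ j i = 0 :=
      (Finset.sum_eq_zero_iff_of_nonneg fun j' _ => hμ j' i).1 hB.symm j (Finset.mem_univ j)
    rw [hμji, ← hB]
    simp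
  · have hsplit : μ j i - (∑ i', μ j i') * ∑ j', μ j' i =
        (μ j i / ∑ j', μ j' i - ∑ i', μ j i') * ∑ j', μ j' i := by
      rw [sub_mul, div_mul_cancel₀ _ hB.ne']
    rw [hsplit, abs_mul, abs_of_pos hB, ← mul_assoc]
    exact mul_le_mul_of_nonneg_right (hcond j i hB) hB.le

theorem abs_covariance_le_of_conditional (hμ : ∀ j i, 0 ≤ μ j i) (hμ1 : ∑ j, ∑ i, μ j i = 1)
    (hε : 0 ≤ ε)
    (hcond : ∀ j i, 0 < ∑ j', μ j' i →
      |μ j i / ∑ j', μ j' i - ∑ i', μ j i'| ≤ ε * ∑ i', μ j i')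
    (x : ι → ℝ) (y : κ → ℝ) :
    |∑ j, x j * ∑ i, y i * μ j i - (∑ j, x j * ∑ i, μ j i) * ∑ i, y i * ∑ j, μ j i| ≤
      ε * √(∑ j, x j ^ 2 * ∑ i, μ j i) * √(∑ i, y i ^ 2 * ∑ j, μ j i) := by
  set A : ι → ℝ := fun j => ∑ i, μ j i
  set B : κ → ℝ := fun i => ∑ j, μ j i
  have hA : ∀ j, 0 ≤ A j := fun j => Finset.sum_nonneg fun i _ => hμ j i
  have hB : ∀ i, 0 ≤ B i := fun i => Finset.sum_nonneg fun j _ => hμ j i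
  have hB1 : ∑ i, B i = 1 := by rw [Finset.sum_comm]; exact hμ1
  have hcov : ∑ j, x j * ∑ i, y i * μ j i - (∑ j, x j * A j) * ∑ i, y i * B i =
      ∑ j, ∑ i, x j * y i * (μ j i - A j * B i) := by
    rw [Finset.sum_mul_sum, ← Finset.sum_sub_distrib]
    refine Finset.sum_congr rfl fun j _ => ?_
    rw [Finset.mul_sum, ← Finset.sum_sub_distrib]
    exact Finset.sum_congr rfl fun i _ => by ring
  rw [hcov]
  calc |∑ j, ∑ i, x j * y i * (μ j i - A j * B i)|
      ≤ ∑ j, ∑ i, |x j| * |y i| * (ε * (A j * B i)) := by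
        refine (Finset.abs_sum_le_sum_abs _ _).trans <| Finset.sum_le_sum fun j _ =>
          (Finset.abs_sum_le_sum_abs _ _).trans <| Finset.sum_le_sum fun i _ => ?_
        rw [abs_mul, abs_mul]
        exact mul_le_mul_of_nonneg_left (abs_sub_mul_marginals_le hμ hcond j i)
          (by positivity)
    _ = ε * ((∑ j, |x j| * A j) * ∑ i, |y i| * B i) := by
        rw [Finset.sum_mul_sum, Finset.mul_sum]
        refine Finset.sum_congr rfl fun j _ => ?_
        rw [Finset.mul_sum]
        exact Finset.sum_congr rfl fun i _ => by ring
    _ ≤ ε * √(∑ j, x j ^ 2 * A j) * √(∑ i, y i ^ 2 * B i) := by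
        rw [mul_assoc]
        refine mul_le_mul_of_nonneg_left (mul_le_mul (sum_abs_mul_le_sqrt_sum_sq_mul hA hμ1 x)
          (sum_abs_mul_le_sqrt_sum_sq_mul hB hB1 y) ?_ (Real.sqrt_nonneg _)) hε
        exact Finset.sum_nonneg fun i _ => mul_nonneg (abs_nonneg _) (hB i)

theorem LinearMap.abs_covariance_le_of_conditional {E F : Type*} [AddCommGroup E] [Module ℝ E]
    [AddCommGroup F] [Module ℝ F] (ω : E →ₗ[ℝ] F →ₗ[ℝ] ℝ) {R : ι → E} {Q : κ → F} {e : E} {f : F}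
    (hR : ∑ j, R j = e) (hQ : ∑ i, Q i = f) (h0 : ∀ j i, 0 ≤ ω (R j) (Q i)) (h1 : ω e f = 1)
    (hε : 0 ≤ ε)
    (hcond : ∀ j i, 0 < ω e (Q i) → |ω (R j) (Q i) / ω e (Q i) - ω (R j) f| ≤ ε * ω (R j) f)
    (x : ι → ℝ) (y : κ → ℝ) :
    |ω (∑ j, x j • R j) (∑ i, y i • Q i) - ω (∑ j, x j • R j) f * ω e (∑ i, y i • Q i)| ≤
      ε * √(ω (∑ j, x j ^ 2 • R j) f) * √(ω e (∑ i, y i ^ 2 • Q i)) := by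
  have hA (j : ι) : ω (R j) f = ∑ i, ω (R j) (Q i) := by rw [← hQ, map_sum]
  have hB (i : κ) : ω e (Q i) = ∑ j, ω (R j) (Q i) := by rw [← hR, LinearMap.map_sum₂]
  have hxy : ω (∑ j, x j • R j) (∑ i, y i • Q i) = ∑ j, x j * ∑ i, y i * ω (R j) (Q i) := by
    rw [LinearMap.map_sum₂]
    simp only [map_sum, map_smul, LinearMap.smul_apply, smul_eq_mul]
    refine Finset.sum_congr rfl fun j _ => ?_
    rw [Finset.mul_sum]
    exact Finset.sum_congr rfl fun i _ => by ring
  rw [← hR, LinearMap.map_sum₂] at h1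
  simp only [hA, hB] at h1 hcond
  rw [hxy]
  simp only [map_sum, map_smul, LinearMap.sum_apply, LinearMap.smul_apply, smul_eq_mul, hA, hB]
  exact _root_.abs_covariance_le_of_conditional h0 h1 hε hcond x y

end JointLaw

theorem qIIId_implies_qL2GNS_general {a b r : ℕ} (ε : ℝ) (hε : 0 ≤ ε)
    (σ : Matrix (Fin a × Fin b × Fin r) (Fin a × Fin b × Fin r) ℂ)
    (hσ : σ.PosDef)
    (P : Matrix (Fin r) (Fin r) ℂ)
    (hP0 : P.PosSemidef)
    (hPσ : 0 < (Matrix.trace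
      (((1 : Matrix (Fin a) (Fin a) ℂ) ⊗ₖ ((1 : Matrix (Fin b) (Fin b) ℂ) ⊗ₖ P)) * σ)).re)
    (hyp : ∀ N : Matrix (Fin a) (Fin a) ℂ, N.PosSemidef →
      ∀ PB PB' : Matrix (Fin b) (Fin b) ℂ,
        PB.PosSemidef → (1 - PB).PosSemidef → PB'.PosSemidef → (1 - PB').PosSemidef →
        0 < (Matrix.trace (((1 : Matrix (Fin a) (Fin a) ℂ) ⊗ₖ (PB ⊗ₖ P)) * σ)).re →
        0 < (Matrix.trace (((1 : Matrix (Fin a) (Fin a) ℂ) ⊗ₖ (PB' ⊗ₖ P)) * σ)).re →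
        |(Matrix.trace (postSelect σ ((1 : Matrix (Fin a) (Fin a) ℂ) ⊗ₖ (PB ⊗ₖ P)) *
              (N ⊗ₖ ((1 : Matrix (Fin b) (Fin b) ℂ) ⊗ₖ (1 : Matrix (Fin r) (Fin r) ℂ))))).re -
          (Matrix.trace (postSelect σ ((1 : Matrix (Fin a) (Fin a) ℂ) ⊗ₖ (PB' ⊗ₖ P)) *
              (N ⊗ₖ ((1 : Matrix (Fin b) (Fin b) ℂ) ⊗ₖ (1 : Matrix (Fin r) (Fin r) ℂ))))).re| ≤
          ε * (Matrix.trace (postSelect σ ((1 : Matrix (Fin a) (Fin a) ℂ) ⊗ₖ (PB' ⊗ₖ P)) *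
              (N ⊗ₖ ((1 : Matrix (Fin b) (Fin b) ℂ) ⊗ₖ (1 : Matrix (Fin r) (Fin r) ℂ))))).re) :
    ∀ X : Matrix (Fin a) (Fin a) ℂ, X.IsHermitian →
    ∀ Y : Matrix (Fin b) (Fin b) ℂ, Y.IsHermitian →
      |(Matrix.trace (postSelect σ
            ((1 : Matrix (Fin a) (Fin a) ℂ) ⊗ₖ ((1 : Matrix (Fin b) (Fin b) ℂ) ⊗ₖ P)) *
            (X ⊗ₖ (Y ⊗ₖ (1 : Matrix (Fin r) (Fin r) ℂ))))).re -
        (Matrix.trace (postSelect σ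
            ((1 : Matrix (Fin a) (Fin a) ℂ) ⊗ₖ ((1 : Matrix (Fin b) (Fin b) ℂ) ⊗ₖ P)) *
            (X ⊗ₖ ((1 : Matrix (Fin b) (Fin b) ℂ) ⊗ₖ (1 : Matrix (Fin r) (Fin r) ℂ))))).re *
        (Matrix.trace (postSelect σ
            ((1 : Matrix (Fin a) (Fin a) ℂ) ⊗ₖ ((1 : Matrix (Fin b) (Fin b) ℂ) ⊗ₖ P)) *
            ((1 : Matrix (Fin a) (Fin a) ℂ) ⊗ₖ (Y ⊗ₖ (1 : Matrix (Fin r) (Fin r) ℂ))))).re| ≤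
      4 * ε *
        Real.sqrt (Matrix.trace (postSelect σ
            ((1 : Matrix (Fin a) (Fin a) ℂ) ⊗ₖ ((1 : Matrix (Fin b) (Fin b) ℂ) ⊗ₖ P)) *
            ((X * X) ⊗ₖ ((1 : Matrix (Fin b) (Fin b) ℂ) ⊗ₖ (1 : Matrix (Fin r) (Fin r) ℂ))))).re *
        Real.sqrt (Matrix.trace (postSelect σ
            ((1 : Matrix (Fin a) (Fin a) ℂ) ⊗ₖ ((1 : Matrix (Fin b) (Fin b) ℂ) ⊗ₖ P)) *
            ((1 : Matrix (Fin a) (Fin a) ℂ) ⊗ₖ ((Y * Y) ⊗ₖ (1 : Matrix (Fin r) (Fin r) ℂ))))).re := by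
  intro X hX Y hY
  set ω := kronPairing (postSelect σ (1 ⊗ₖ (1 ⊗ₖ P))) (1 : Matrix (Fin r) (Fin r) ℂ)
  change |ω X Y - ω X 1 * ω 1 Y| ≤ 4 * ε * √(ω (X * X) 1) * √(ω 1 (Y * Y))
  have hcond (j i) (hpos : 0 < ω 1 (hY.spectralProj i)) :
      |ω (hX.spectralProj j) (hY.spectralProj i) / ω 1 (hY.spectralProj i) -
        ω (hX.spectralProj j) 1| ≤ ε * ω (hX.spectralProj j) 1 := by
    have h := hyp _ (hX.posSemidef_spectralProj j) _ 1 (hY.posSemidef_spectralProj i)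
      (posSemidef_one_sub_of_sum_eq_one hY.posSemidef_spectralProj hY.sum_spectralProj i)
      PosSemidef.one (by simpa using PosSemidef.zero)
      (trace_pos_of_kronPairing_postSelect_pos hσ.posSemidef hP0 hPσ hpos) hPσ
    rwa [re_trace_postSelect_kronecker_eq_div hσ.posSemidef hP0 hPσ
      (hY.posSemidef_spectralProj i)] at h
  have h := ω.abs_covariance_le_of_conditional hX.sum_spectralProj hY.sum_spectralProj
    (fun j i => kronPairing_postSelect_nonneg hσ.posSemidef hP0
      (hX.posSemidef_spectralProj j) (hY.posSemidef_spectralProj i))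
    (kronPairing_postSelect_one_one hσ.posSemidef hP0 hPσ) hε hcond hX.eigenvalues hY.eigenvalues
  rw [hX.sum_eigenvalues_smul_spectralProj, hY.sum_eigenvalues_smul_spectralProj,
    hX.sum_eigenvalues_sq_smul_spectralProj, hY.sum_eigenvalues_sq_smul_spectralProj] at h
  refine h.trans ?_
  gcongr
  linarith

/-- (Implication (qIIId) ⇒ (qL₂⁽⁰⁾), one fixed configuration.)
On a tripartite space `ℂ^a ⊗ ℂ^b ⊗ ℂ^r`, if the post-selected states of `σ` satisfy the
quantum Dobrushin–Shlosman condition with constant `ε` relative to the boundary test `P`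
on the third factor, then the GNS covariance of `X ⊗ 1 ⊗ 1` and `1 ⊗ Y ⊗ 1` in the state
`τ = σ^{1⊗1⊗P}` is bounded by `4ε` times the product of the GNS norms of `X` and `Y`. -/
theorem qIIId_implies_qL2GNS {a b r : ℕ} (ε : ℝ) (hε : 0 ≤ ε)
    (σ : Matrix (Fin a × Fin b × Fin r) (Fin a × Fin b × Fin r) ℂ)
    (hσ : σ.PosDef) (hσtr : σ.trace = 1)
    (P : Matrix (Fin r) (Fin r) ℂ)
    (hP0 : P.PosSemidef) (hP1 : (1 - P).PosSemidef)
    (hPσ : 0 < (Matrix.trace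
      (((1 : Matrix (Fin a) (Fin a) ℂ) ⊗ₖ ((1 : Matrix (Fin b) (Fin b) ℂ) ⊗ₖ P)) * σ)).re)
    (hyp : ∀ N : Matrix (Fin a) (Fin a) ℂ, N.PosSemidef →
      ∀ PB PB' : Matrix (Fin b) (Fin b) ℂ,
        PB.PosSemidef → (1 - PB).PosSemidef → PB'.PosSemidef → (1 - PB').PosSemidef →
        0 < (Matrix.trace (((1 : Matrix (Fin a) (Fin a) ℂ) ⊗ₖ (PB ⊗ₖ P)) * σ)).re →
        0 < (Matrix.trace (((1 : Matrix (Fin a) (Fin a) ℂ) ⊗ₖ (PB' ⊗ₖ P)) * σ)).re →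
        |(Matrix.trace (postSelect σ ((1 : Matrix (Fin a) (Fin a) ℂ) ⊗ₖ (PB ⊗ₖ P)) *
              (N ⊗ₖ ((1 : Matrix (Fin b) (Fin b) ℂ) ⊗ₖ (1 : Matrix (Fin r) (Fin r) ℂ))))).re -
          (Matrix.trace (postSelect σ ((1 : Matrix (Fin a) (Fin a) ℂ) ⊗ₖ (PB' ⊗ₖ P)) *
              (N ⊗ₖ ((1 : Matrix (Fin b) (Fin b) ℂ) ⊗ₖ (1 : Matrix (Fin r) (Fin r) ℂ))))).re| ≤
          ε * (Matrix.trace (postSelect σ ((1 : Matrix (Fin a) (Fin a) ℂ) ⊗ₖ (PB' ⊗ₖ P)) *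
              (N ⊗ₖ ((1 : Matrix (Fin b) (Fin b) ℂ) ⊗ₖ (1 : Matrix (Fin r) (Fin r) ℂ))))).re) :
    ∀ X : Matrix (Fin a) (Fin a) ℂ, X.IsHermitian →
    ∀ Y : Matrix (Fin b) (Fin b) ℂ, Y.IsHermitian →
      |(Matrix.trace (postSelect σ
            ((1 : Matrix (Fin a) (Fin a) ℂ) ⊗ₖ ((1 : Matrix (Fin b) (Fin b) ℂ) ⊗ₖ P)) *
            (X ⊗ₖ (Y ⊗ₖ (1 : Matrix (Fin r) (Fin r) ℂ))))).re -
        (Matrix.trace (postSelect σ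
            ((1 : Matrix (Fin a) (Fin a) ℂ) ⊗ₖ ((1 : Matrix (Fin b) (Fin b) ℂ) ⊗ₖ P)) *
            (X ⊗ₖ ((1 : Matrix (Fin b) (Fin b) ℂ) ⊗ₖ (1 : Matrix (Fin r) (Fin r) ℂ))))).re *
        (Matrix.trace (postSelect σ
            ((1 : Matrix (Fin a) (Fin a) ℂ) ⊗ₖ ((1 : Matrix (Fin b) (Fin b) ℂ) ⊗ₖ P)) *
            ((1 : Matrix (Fin a) (Fin a) ℂ) ⊗ₖ (Y ⊗ₖ (1 : Matrix (Fin r) (Fin r) ℂ))))).re| ≤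
      4 * ε *
        Real.sqrt (Matrix.trace (postSelect σ
            ((1 : Matrix (Fin a) (Fin a) ℂ) ⊗ₖ ((1 : Matrix (Fin b) (Fin b) ℂ) ⊗ₖ P)) *
            ((X * X) ⊗ₖ ((1 : Matrix (Fin b) (Fin b) ℂ) ⊗ₖ (1 : Matrix (Fin r) (Fin r) ℂ))))).re *
        Real.sqrt (Matrix.trace (postSelect σ
            ((1 : Matrix (Fin a) (Fin a) ℂ) ⊗ₖ ((1 : Matrix (Fin b) (Fin b) ℂ) ⊗ₖ P)) *
            ((1 : Matrix (Fin a) (Fin a) ℂ) ⊗ₖ ((Y * Y) ⊗ₖ (1 : Matrix (Fin r) (Fin r) ℂ))))).re :=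
  qIIId_implies_qL2GNS_general ε hε σ hσ P hP0 hPσ hyp
end
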